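/- Let Δ be a group and η: Δ → ℤ a ℤ-grading of Δ. Let (x,σ) ∈ M^0_η(Δ). Suppose ξ ∈ Δ* and ξ' ∈ Δ*, σ̃ is an extension of σ to a representation of Z_Δ(x) on which ξ acts as the identity, and σ̃' is an extension of σ to a representation of Z_Δ(x) on which ξ' acts as the identity. Then there exists a root of unity ω ∈ ℂ such that (x,σ)^_{ξ',σ̃'} = ω · (x,σ)^_{ξ,σ̃} in U^1_η(Δ). -/

import Mathlib

open CategoryTheory
open scoped Classical

noncomputable section

/-- The centralizer of an element. -/
abbrev Zd {Δ : Type} [Group Δ] (x : Δ) : Subgroup Δ :=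
  Subgroup.centralizer ({x} : Set Δ)

/-- `Z_Δ(x) ∩ η⁻¹(0)`. -/
abbrev Kd {Δ : Type} [Group Δ] (η : Δ →* Multiplicative ℤ) (x : Δ) : Subgroup Δ :=
  Zd x ⊓ η.ker

lemma mem_Zd_self {Δ : Type} [Group Δ] (x : Δ) : x ∈ Zd x :=
  Subgroup.mem_centralizer_iff.mpr (by rintro g rfl; rfl)

lemma central_mem_Zd {Δ : Type} [Group Δ] {ξ : Δ}
    (hξ : ξ ∈ Subgroup.center Δ) (x : Δ) : ξ ∈ Zd x :=
  Subgroup.mem_centralizer_iff.mpr (by rintro g rfl; exact Subgroup.mem_center_iff.mp hξ g)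

/-- `Δ*`: the set of central elements `ξ` of `Δ` of the form `ξ = y ^ c` with
`y ∈ η⁻¹(1)`, `c ≥ 1`. -/
def DeltaStar {Δ : Type} [Group Δ] (η : Δ →* Multiplicative ℤ) : Set Δ :=
  {ξ | ξ ∈ Subgroup.center Δ ∧
    ∃ (y : Δ) (c : ℕ), η y = Multiplicative.ofAdd 1 ∧ 1 ≤ c ∧ y ^ c = ξ}

/-- Restriction of a finite-dimensional representation along a group homomorphism. -/
def FDRep.res {H K : Type} [Group H] [Group K] (f : H →* K) (σ : FDRep ℂ K) : FDRep ℂ H :=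
  FDRep.of (σ.ρ.comp f)

/-- A pair `(x, τ)` representing an element of `M^i_η(Δ)`: here `x ∈ η⁻¹(i)`, `τ` is an
irreducible representation of `Z_Δ(x) ∩ η⁻¹(0)`, `Z_Δ(x) ∩ η⁻¹(1) ≠ ∅`, and `τ` extends
to a representation of `Z_Δ(x)`. -/
structure PairD {Δ : Type} [Group Δ] (η : Δ →* Multiplicative ℤ) (i : ℤ) where
  x : Δ
  hx : η x = Multiplicative.ofAdd i
  τ : FDRep ℂ ↥(Kd η x)
  irr : Simple τ
  hne : ∃ z ∈ Zd x, η z = Multiplicative.ofAdd 1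
  hext : ∃ ρ' : Representation ℂ ↥(Zd x) τ,
    ∀ t : ↥(Kd η x), ρ' (Subgroup.inclusion inf_le_left t) = τ.ρ t

/-- Conjugation `z ↦ v⁻¹ z v`, as a homomorphism `Z_Δ(v x v⁻¹) ∩ η⁻¹(0) →* Z_Δ(x) ∩ η⁻¹(0)`. -/
def conjHomK {Δ : Type} [Group Δ] (η : Δ →* Multiplicative ℤ) (v x x' : Δ)
    (h : x' = v * x * v⁻¹) : ↥(Kd η x') →* ↥(Kd η x) where
  toFun z := ⟨v⁻¹ * (z : Δ) * v, by
    rcases z.2 with ⟨hz1, hz2⟩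
    constructor
    · subst h
      have hz : (v * x * v⁻¹) * (z : Δ) = (z : Δ) * (v * x * v⁻¹) :=
        Subgroup.mem_centralizer_iff.mp hz1 _ rfl
      refine Subgroup.mem_centralizer_iff.mpr ?_
      rintro g rfl
      have := congrArg (fun t => v⁻¹ * t * v) hz
      simpa [mul_assoc] using this
    · have : η (z : Δ) = 1 := hz2
      simp [MonoidHom.mem_ker, this]⟩
  map_one' := by ext; simp
  map_mul' z w := by ext; simp [mul_assoc]

/-- The equivalence `(x,τ) ∼ (v x v⁻¹, ᵛτ)` on pairs. -/
def pairRelD {Δ : Type} [Group Δ] (η : Δ →* Multiplicative ℤ) (i : ℤ)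
    (p p' : PairD η i) : Prop :=
  ∃ (v : Δ) (h : p'.x = v * p.x * v⁻¹),
    Nonempty (p'.τ ≅ FDRep.res (conjHomK η v p.x p'.x h) p.τ)

/-- `M^i_η(Δ)`: pairs modulo the conjugation equivalence. -/
abbrev MD {Δ : Type} [Group Δ] (η : Δ →* Multiplicative ℤ) (i : ℤ) : Type 1 :=
  Quot (pairRelD η i)

/-- `U^i_η(Δ)`: the vector space with basis `M^i_η(Δ)`. -/
abbrev UD {Δ : Type} [Group Δ] (η : Δ →* Multiplicative ℤ) (i : ℤ) : Type 1 :=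
  MD η i → ℂ

/-- The trace function of a representation of `Z_Δ(x)`, extended by zero to `Δ`. -/
def repTrace {Δ : Type} [Group Δ] (x : Δ) {W : Type} [AddCommGroup W] [Module ℂ W]
    (ρ : Representation ℂ ↥(Zd x) W) : Δ → ℂ :=
  fun g => if h : g ∈ Zd x then LinearMap.trace ℂ W (ρ ⟨g, h⟩) else 0

/-- For a pair `(y,τ) ∈ M^1_η(Δ)`, the trace function of the representation `τ̃` of
`Z_Δ(y)` extending `τ` on which `y` acts as the identity, extended by zero to `Δ`. -/
def tExtTrace {Δ : Type} [Group Δ] (η : Δ →* Multiplicative ℤ) (p : PairD η 1) : Δ → ℂ :=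
  if h : ∃ ρ' : Representation ℂ ↥(Zd p.x) p.τ,
      (∀ t : ↥(Kd η p.x), ρ' (Subgroup.inclusion inf_le_left t) = p.τ.ρ t) ∧
      ρ' ⟨p.x, mem_Zd_self p.x⟩ = 1
  then repTrace p.x h.choose
  else fun _ => 0

/-- The element `(x,σ)^_{ξ,σ̃} ∈ U^1_η(Δ)`, i.e. the formal sum
`Σ_{(y,τ) ∈ M^1_η(Δ)} Σ_{w ∈ Δ/⟨ξ⟩, x(wyw⁻¹)=(wyw⁻¹)x} η(ξ) |Z_Δ(x)/⟨ξ⟩|⁻¹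
|Z_Δ(y)/⟨ξ⟩|⁻¹ tr(w⁻¹x⁻¹w, τ̃) tr(wyw⁻¹, σ̃) (y,τ)`. -/
def hatFn {Δ : Type} [Group Δ] (η : Δ →* Multiplicative ℤ) (x : Δ) (ξ : Δ)
    (hξ : ξ ∈ Subgroup.center Δ) {W : Type} [AddCommGroup W] [Module ℂ W]
    (σt : Representation ℂ ↥(Zd x) W) : UD η 1 :=
  fun m =>
    ∑ᶠ w : Δ ⧸ Subgroup.zpowers ξ,
      if x * (w.out * m.out.x * w.out⁻¹) = (w.out * m.out.x * w.out⁻¹) * x then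
        ((Multiplicative.toAdd (η ξ) : ℤ) : ℂ) *
          (Nat.card (↥(Zd x) ⧸ Subgroup.zpowers
            (⟨ξ, central_mem_Zd hξ x⟩ : ↥(Zd x))) : ℂ)⁻¹ *
          (Nat.card (↥(Zd m.out.x) ⧸ Subgroup.zpowers
            (⟨ξ, central_mem_Zd hξ m.out.x⟩ : ↥(Zd m.out.x))) : ℂ)⁻¹ *
          tExtTrace η m.out (w.out⁻¹ * x⁻¹ * w.out) *
          repTrace x σt (w.out * m.out.x * w.out⁻¹)
      else 0

end

/-!
By Schur's lemma the two extensions differ by a character `χ` of `Z_Δ(x)`; it is trivial on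
`Z_Δ(x) ∩ η⁻¹(0)`, so it only depends on the degree. Every `w y w⁻¹` in the sum has degree
one, so replacing `σ̃` by `σ̃'` multiplies the sum by `χ(z)` for any `z ∈ Z_Δ(x)` of degree one.
Replacing `ξ` by a power `ξ ^ k` does not change the sum: `η(ξ)`, both indices and the number
of cosets `w` all gain a factor `k`. Since `ker η` is finite, `ξ` and `ξ'` have a common power
`ζ`; both `σ̃` and `σ̃'` are trivial on `ζ`, so `χ(ζ) = 1`, and as `ζ` has the degree of a power
of `z`, `χ(z)` is a root of unity.
-/

open Subgroup

section GroupTheory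

variable {G : Type*} [Group G]

lemma relIndex_zpowers_pow {g : G} (hg : ¬IsOfFinOrder g) (k : ℕ) :
    (zpowers (g ^ k)).relIndex (zpowers g) = k := by
  set f := zpowersHom G g
  have hf : Function.Injective f := injective_zpow_iff_not_isOfFinOrder.mpr hg
  have hpow : (zpowers (Multiplicative.ofAdd (k : ℤ))).map f = zpowers (g ^ k) := by
    rw [MonoidHom.map_zpowers, zpowersHom_apply, toAdd_ofAdd, zpow_natCast]
  have htop : (⊤ : Subgroup (Multiplicative ℤ)).map f = zpowers g :=
    (MonoidHom.range_eq_map f).symm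
  rw [← hpow, ← htop, relIndex_map_map_of_injective _ _ hf, relIndex_top_right,
    show zpowers (Multiplicative.ofAdd (k : ℤ)) = (AddSubgroup.zmultiples (k : ℤ)).toSubgroup
      from rfl,
    AddSubgroup.index_toSubgroup, Int.index_zmultiples, Int.natAbs_natCast]

lemma index_zpowers_pow {g : G} (hg : ¬IsOfFinOrder g) (k : ℕ) :
    (zpowers (g ^ k)).index = k * (zpowers g).index := by
  rw [← relIndex_mul_index (zpowers_le.mpr (pow_mem (mem_zpowers g) k)),
    relIndex_zpowers_pow hg]

lemma not_isOfFinOrder_of_map_ne_one {H : Type*} [Group H] [IsMulTorsionFree H]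
    (η : G →* H) {g : G} (hg : η g ≠ 1) : ¬IsOfFinOrder g :=
  fun h => hg (η.isOfFinOrder h).eq_one'

lemma exists_pow_eq_pow_of_map_eq {H : Type*} [Group H] (η : G →* H) [Finite η.ker]
    {a b : G} (hab : Commute a b) (h : η a = η b) : ∃ N, 0 < N ∧ a ^ N = b ^ N := by
  let d : η.ker := ⟨a * b⁻¹, by simp [MonoidHom.mem_ker, h]⟩
  refine ⟨orderOf d, orderOf_pos d, ?_⟩
  have hd : (a * b⁻¹) ^ orderOf d = 1 := congrArg Subtype.val (pow_orderOf_eq_one d)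
  rwa [hab.inv_right.mul_pow, inv_pow, mul_inv_eq_one] at hd

lemma MonoidHom.eq_of_map_eq_of_ker_le {H M : Type*} [Group H] [Monoid M] (χ : G →* M)
    {θ : G →* H} (hker : θ.ker ≤ χ.ker) {a b : G} (h : θ a = θ b) : χ a = χ b := by
  have hab : a * b⁻¹ ∈ θ.ker := by simp [MonoidHom.mem_ker, h]
  calc χ a = χ (a * b⁻¹) * χ b := by rw [← map_mul, inv_mul_cancel_right]
    _ = χ b := by rw [hker hab, one_mul]

lemma range_inclusion_inf_ker {H : Type*} [Group H] (K : Subgroup G) (η : G →* H) :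
    (inclusion (inf_le_left : K ⊓ η.ker ≤ K)).range = (η.comp K.subtype).ker := by
  ext g
  simp [inclusion_range, mem_subgroupOf, MonoidHom.mem_ker]

lemma finsum_comp_fst {A B M : Type*} [AddCommMonoid M] [Finite B] [Nonempty B] (F : A → M) :
    ∑ᶠ p : A × B, F p.1 = Nat.card B • ∑ᶠ a, F a := by
  have hsupp : Function.support (fun p : A × B => F p.1) = Function.support F ×ˢ Set.univ := by
    rw [Set.prod_univ]
    exact Function.support_comp_eq_preimage F Prod.fst
  by_cases hF : (Function.support F).Finite
  · have : Fintype B := Fintype.ofFinite B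
    rw [finsum_curry _ (show (Function.support _).Finite by
        rw [hsupp]; exact hF.prod Set.finite_univ),
      smul_finsum' _ hF]
    simp only [finsum_eq_sum_of_fintype, Finset.sum_const, Finset.card_univ,
      Nat.card_eq_fintype_card]
  · have hF' : (Function.support fun p : A × B => F p.1).Infinite := by
      rw [hsupp]
      exact Set.infinite_prod.mpr (Or.inl ⟨hF, Set.univ_nonempty⟩)
    rw [finsum_of_infinite_support hF, finsum_of_infinite_support hF', smul_zero]

/-- Each coset of `H` splits into `H'.relIndex H` cosets of `H'`. -/
lemma finsum_quotient_out_of_le {M : Type*} [AddCommMonoid M] {H' H : Subgroup G}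
    (hle : H' ≤ H) (hfin : H'.relIndex H ≠ 0) (f : G → M)
    (hf : ∀ g, ∀ h ∈ H, f (g * h) = f g) :
    ∑ᶠ w : G ⧸ H', f w.out = H'.relIndex H • ∑ᶠ w : G ⧸ H, f w.out := by
  have : Finite (H ⧸ H'.subgroupOf H) := Nat.finite_of_card_ne_zero hfin
  have hcoset : ∀ g : G, f (g : G ⧸ H).out = f g := fun g => by
    obtain ⟨h, hh⟩ := QuotientGroup.mk_out_eq_mul H g
    rw [hh, hf g h h.2]
  calc ∑ᶠ w : G ⧸ H', f w.out
      = ∑ᶠ w : G ⧸ H', f (quotientEquivProdOfLE hle w).1.out := by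
        refine finsum_congr fun w => ?_
        conv_rhs => rw [← QuotientGroup.out_eq' w]
        exact (hcoset w.out).symm
    _ = ∑ᶠ p : (G ⧸ H) × (H ⧸ H'.subgroupOf H), f p.1.out :=
        finsum_comp_equiv (f := fun p : (G ⧸ H) × (H ⧸ H'.subgroupOf H) => f p.1.out)
          (quotientEquivProdOfLE hle)
    _ = H'.relIndex H • ∑ᶠ w : G ⧸ H, f w.out :=
        finsum_comp_fst (fun u : G ⧸ H => f u.out)

lemma mul_conj_of_mem_center {h : G} (hh : h ∈ center G) (g a : G) :
    g * h * a * (g * h)⁻¹ = g * a * g⁻¹ := by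
  calc g * h * a * (g * h)⁻¹ = g * (a * h) * h⁻¹ * g⁻¹ := by
        rw [mem_center_iff.mp hh a]; group
    _ = g * a * g⁻¹ := by group

lemma conj_mul_of_mem_center {h : G} (hh : h ∈ center G) (g a : G) :
    (g * h)⁻¹ * a * (g * h) = g⁻¹ * a * g := by
  calc (g * h)⁻¹ * a * (g * h) = h⁻¹ * (g⁻¹ * a * g * h) := by group
    _ = g⁻¹ * a * g := by rw [mem_center_iff.mp hh, inv_mul_cancel_left]

end GroupTheory

namespace FDRep

variable {N : Type} [Group N] (τ : FDRep ℂ N) [Simple τ]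

lemma nontrivial_of_simple : Nontrivial τ := by
  by_contra h
  rw [not_nontrivial_iff_subsingleton] at h
  exact id_nonzero τ (Action.hom_ext _ _
    (FGModuleCat.hom_ext (LinearMap.ext fun v => Subsingleton.elim _ _)))

lemma exists_eq_smul_one_of_commute (A : Module.End ℂ τ) (hA : ∀ n, Commute A (τ.ρ n)) :
    ∃ c : ℂ, A = c • 1 := by
  let F : τ ⟶ τ := ⟨FGModuleCat.ofHom A, fun n => FGModuleCat.hom_ext (hA n).eq⟩
  obtain ⟨c, hc⟩ := endomorphism_simple_eq_smul_id ℂ F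
  exact ⟨c, congrArg (fun f : τ ⟶ τ => f.hom.hom.hom) hc.symm⟩

variable {τ} in
lemma smul_left_injective_of_isUnit {A : Module.End ℂ τ} (hA : IsUnit A) :
    Function.Injective fun c : ℂ => c • A :=
  have := nontrivial_of_simple τ
  smul_left_injective ℂ hA.ne_zero

variable {G : Type} [Group G] {ι : N →* G} {τ} {ρ ρ' : Representation ℂ G τ}

/-- Schur's lemma, applied to `ρ' g ∘ ρ g⁻¹`, which commutes with `τ` since `ι` has
normal range. -/
lemma exists_eq_smul_of_extends (hι : ι.range.Normal) (hρ : ∀ n, ρ (ι n) = τ.ρ n)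
    (hρ' : ∀ n, ρ' (ι n) = τ.ρ n) (g : G) : ∃ c : ℂ, ρ' g = c • ρ g := by
  have hcomm : ∀ n, Commute (ρ' g * ρ g⁻¹) (τ.ρ n) := fun n => by
    obtain ⟨n', hn'⟩ := hι.conj_mem (ι n) ⟨n, rfl⟩ g⁻¹
    rw [inv_inv] at hn'
    have h₁ : g⁻¹ * ι n = ι n' * g⁻¹ := by rw [hn']; group
    have h₂ : g * ι n' = ι n * g := by rw [hn']; group
    calc ρ' g * ρ g⁻¹ * τ.ρ n = ρ' g * ρ (g⁻¹ * ι n) := by rw [map_mul, hρ, mul_assoc]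
      _ = ρ' (g * ι n') * ρ g⁻¹ := by rw [h₁, map_mul, hρ, ← hρ', ← mul_assoc, ← map_mul]
      _ = τ.ρ n * (ρ' g * ρ g⁻¹) := by rw [h₂, map_mul, hρ', mul_assoc]
  obtain ⟨c, hc⟩ := exists_eq_smul_one_of_commute τ _ hcomm
  refine ⟨c, ?_⟩
  calc ρ' g = ρ' g * ρ g⁻¹ * ρ g := by rw [mul_assoc, ← map_mul, inv_mul_cancel, map_one, mul_one]
    _ = c • ρ g := by rw [hc, smul_one_mul]

lemma exists_character_of_extends (hι : ι.range.Normal) (hρ : ∀ n, ρ (ι n) = τ.ρ n)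
    (hρ' : ∀ n, ρ' (ι n) = τ.ρ n) :
    ∃ χ : G →* ℂ, (∀ g, ρ' g = χ g • ρ g) ∧ ι.range ≤ χ.ker := by
  have hcancel : ∀ g, Function.Injective fun c : ℂ => c • ρ g := fun g =>
    smul_left_injective_of_isUnit ((Group.isUnit g).map ρ)
  choose μ hμ using exists_eq_smul_of_extends hι hρ hρ'
  let χ : G →* ℂ :=
    { toFun := μ
      map_one' := hcancel 1 <| show μ 1 • ρ 1 = 1 • ρ 1 by rw [← hμ, map_one, map_one, one_smul]
      map_mul' := fun g h => hcancel (g * h) <|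
        show μ (g * h) • ρ (g * h) = (μ g * μ h) • ρ (g * h) by
          rw [← hμ, map_mul, map_mul, hμ, hμ, smul_mul_smul_comm] }
  refine ⟨χ, hμ, ?_⟩
  rintro _ ⟨n, rfl⟩
  exact hcancel (ι n) <| show μ (ι n) • ρ (ι n) = 1 • ρ (ι n) by rw [← hμ, one_smul, hρ, hρ']

lemma character_eq_one {χ : G →* ℂ} (hχ : ∀ g, ρ' g = χ g • ρ g) {g : G} (hg : ρ g = 1)
    (hg' : ρ' g = 1) : χ g = 1 :=
  smul_left_injective_of_isUnit isUnit_one <|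
    calc χ g • (1 : Module.End ℂ τ) = ρ' g := by rw [hχ, hg]
      _ = (1 : ℂ) • 1 := by rw [hg', one_smul]

end FDRep

section Pairs

variable {Δ : Type} [Group Δ] {η : Δ →* Multiplicative ℤ}

lemma DeltaStar.exists_map_eq_pow {ξ : Δ} (hξ : ξ ∈ DeltaStar η) :
    ∃ c : ℕ, 0 < c ∧ η ξ = Multiplicative.ofAdd (1 : ℤ) ^ c := by
  obtain ⟨-, y, c, hy, hc, rfl⟩ := hξ
  exact ⟨c, hc, by rw [map_pow, hy]⟩

lemma DeltaStar.pow_mem {ξ : Δ} (hξ : ξ ∈ DeltaStar η) {k : ℕ} (hk : 0 < k) :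
    ξ ^ k ∈ DeltaStar η := by
  obtain ⟨hcenter, y, c, hy, hc, rfl⟩ := hξ
  exact ⟨Subgroup.pow_mem _ hcenter k, y, c * k, hy, Nat.mul_pos hc hk, pow_mul y c k⟩

lemma DeltaStar.not_isOfFinOrder {ξ : Δ} (hξ : ξ ∈ DeltaStar η) : ¬IsOfFinOrder ξ := by
  obtain ⟨c, hc, hξc⟩ := DeltaStar.exists_map_eq_pow hξ
  refine not_isOfFinOrder_of_map_ne_one η ?_
  rw [hξc, ← ofAdd_nsmul, nsmul_one, Ne, ofAdd_eq_one]
  exact_mod_cast hc.ne'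

/-- `ξ ^ c'` and `ξ' ^ c` have the same degree, so they differ by an element of the finite
group `ker η`. -/
lemma DeltaStar.exists_pow_eq_pow [Finite η.ker] {ξ ξ' : Δ} (hξ : ξ ∈ DeltaStar η)
    (hξ' : ξ' ∈ DeltaStar η) : ∃ k k' : ℕ, 0 < k ∧ 0 < k' ∧ ξ ^ k = ξ' ^ k' := by
  obtain ⟨c, hc, hηξ⟩ := DeltaStar.exists_map_eq_pow hξ
  obtain ⟨c', hc', hηξ'⟩ := DeltaStar.exists_map_eq_pow hξ'
  have hcomm : Commute ξ ξ' := (mem_center_iff.mp hξ.1 ξ').symm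
  obtain ⟨N, hN, hpow⟩ := exists_pow_eq_pow_of_map_eq η (hcomm.pow_pow c' c)
    (by rw [map_pow, map_pow, hηξ, hηξ', ← pow_mul, ← pow_mul, mul_comm])
  rw [← pow_mul, ← pow_mul] at hpow
  exact ⟨c' * N, c * N, Nat.mul_pos hc' hN, Nat.mul_pos hc hN, hpow⟩

lemma PairD.exists_character {i : ℤ} (p : PairD η i) {σt σt' : Representation ℂ (Zd p.x) p.τ}
    (hσt : ∀ t : Kd η p.x, σt (inclusion inf_le_left t) = p.τ.ρ t)
    (hσt' : ∀ t : Kd η p.x, σt' (inclusion inf_le_left t) = p.τ.ρ t) :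
    ∃ χ : Zd p.x →* ℂ, (∀ g, σt' g = χ g • σt g) ∧
      ∀ g₁ g₂ : Zd p.x, η g₁ = η g₂ → χ g₁ = χ g₂ := by
  have := p.irr
  have hrange := range_inclusion_inf_ker (Zd p.x) η
  have hnormal : (inclusion (inf_le_left : Kd η p.x ≤ Zd p.x)).range.Normal := by
    rw [hrange]
    infer_instance
  obtain ⟨χ, hχ, hker⟩ := FDRep.exists_character_of_extends hnormal hσt hσt'
  exact ⟨χ, hχ, fun g₁ g₂ h => χ.eq_of_map_eq_of_ker_le (θ := η.comp (Zd p.x).subtype)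
    (hrange ▸ hker) h⟩

variable {x : Δ} {W : Type} [AddCommGroup W] [Module ℂ W]

/-- The summand of `hatFn` at a representative `g`, stripped of the factor that does not
depend on `g`. -/
noncomputable def hatTerm (σt : Representation ℂ (Zd x) W) (q : PairD η 1) (g : Δ) : ℂ :=
  if x * (g * q.x * g⁻¹) = (g * q.x * g⁻¹) * x then
    tExtTrace η q (g⁻¹ * x⁻¹ * g) * repTrace x σt (g * q.x * g⁻¹)
  else 0

lemma hatFn_apply (ξ : Δ) (hξ : ξ ∈ center Δ) (σt : Representation ℂ (Zd x) W) (m : MD η 1) :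
    hatFn η x ξ hξ σt m =
      ((Multiplicative.toAdd (η ξ) : ℤ) : ℂ) *
        ((zpowers (⟨ξ, central_mem_Zd hξ x⟩ : Zd x)).index : ℂ)⁻¹ *
        ((zpowers (⟨ξ, central_mem_Zd hξ m.out.x⟩ : Zd m.out.x)).index : ℂ)⁻¹ *
        ∑ᶠ w : Δ ⧸ zpowers ξ, hatTerm σt m.out w.out := by
  rw [mul_finsum]
  refine finsum_congr fun w => ?_
  simp only [hatTerm, index]
  split_ifs <;> ring

lemma hatTerm_mul_of_mem_center (σt : Representation ℂ (Zd x) W) (q : PairD η 1) {h : Δ}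
    (hh : h ∈ center Δ) (g : Δ) : hatTerm σt q (g * h) = hatTerm σt q g := by
  simp only [hatTerm, mul_conj_of_mem_center hh, conj_mul_of_mem_center hh]

/-- Replacing `ξ` by `ξ ^ k` multiplies `η(ξ)`, both indices and the number of summands by
`k`. -/
lemma hatFn_of_pow_eq {ξ ζ : Δ} (hξ : ξ ∈ center Δ) (hζ : ζ ∈ center Δ) (hinf : ¬IsOfFinOrder ξ)
    {k : ℕ} (hk : 0 < k) (hpow : ξ ^ k = ζ) (σt : Representation ℂ (Zd x) W) :
    hatFn η x ζ hζ σt = hatFn η x ξ hξ σt := by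
  subst hpow
  funext m
  have hindex : ∀ y : Δ, ((zpowers (⟨ξ ^ k, central_mem_Zd hζ y⟩ : Zd y)).index : ℂ) =
      k * (zpowers (⟨ξ, central_mem_Zd hξ y⟩ : Zd y)).index := fun y => by
    have hinf' : ¬IsOfFinOrder (⟨ξ, central_mem_Zd hξ y⟩ : Zd y) :=
      fun h => hinf (Submonoid.isOfFinOrder_coe.mpr h)
    exact_mod_cast index_zpowers_pow hinf' k
  have hsum := finsum_quotient_out_of_le (zpowers_le.mpr (pow_mem (mem_zpowers ξ) k))
    (by rw [relIndex_zpowers_pow hinf]; exact hk.ne') (hatTerm σt m.out)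
    fun g h hh => hatTerm_mul_of_mem_center σt m.out (zpowers_le.mpr hξ hh) g
  rw [hatFn_apply, hatFn_apply, hindex, hindex, hsum, relIndex_zpowers_pow hinf, map_pow,
    toAdd_pow, nsmul_eq_mul, nsmul_eq_mul]
  have hk' : (k : ℂ) ≠ 0 := by exact_mod_cast hk.ne'
  push_cast
  field_simp

lemma repTrace_eq_mul_of_eq_smul {σt σt' : Representation ℂ (Zd x) W} (c : ℂ) {g : Δ}
    (h : ∀ hg : g ∈ Zd x, σt' ⟨g, hg⟩ = c • σt ⟨g, hg⟩) :
    repTrace x σt' g = c * repTrace x σt g := by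
  unfold repTrace
  split_ifs with hg
  · rw [h hg, map_smul, smul_eq_mul]
  · rw [mul_zero]

/-- Only degree-one arguments `w y w⁻¹` of `repTrace` occur in `hatFn`. -/
lemma hatFn_eq_smul_of_repTrace {σt σt' : Representation ℂ (Zd x) W} (c : ℂ)
    (h : ∀ g, η g = Multiplicative.ofAdd 1 → repTrace x σt' g = c * repTrace x σt g)
    (ξ : Δ) (hξ : ξ ∈ center Δ) :
    hatFn η x ξ hξ σt' = c • hatFn η x ξ hξ σt := by
  funext m
  have hterm : ∀ g, hatTerm σt' m.out g = c * hatTerm σt m.out g := fun g => by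
    have hdeg : η (g * m.out.x * g⁻¹) = Multiplicative.ofAdd 1 := by simp [m.out.hx]
    unfold hatTerm
    split_ifs
    · rw [h _ hdeg]
      ring
    · rw [mul_zero]
  simp_rw [Pi.smul_apply, smul_eq_mul, hatFn_apply, hterm, ← mul_finsum]
  ring

end Pairs

theorem hat_independent_of_choices_general
    {Δ : Type} [Group Δ] (η : Δ →* Multiplicative ℤ)
    (hker : Finite η.ker)
    (p : PairD η 0)
    (ξ ξ' : Δ) (hξ : ξ ∈ DeltaStar η) (hξ' : ξ' ∈ DeltaStar η)
    (σt : Representation ℂ ↥(Zd p.x) ↥p.τ)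
    (hσt_ext : ∀ t : ↥(Kd η p.x), σt (Subgroup.inclusion inf_le_left t) = p.τ.ρ t)
    (hσt_ξ : σt ⟨ξ, central_mem_Zd hξ.1 p.x⟩ = 1)
    (σt' : Representation ℂ ↥(Zd p.x) ↥p.τ)
    (hσt'_ext : ∀ t : ↥(Kd η p.x), σt' (Subgroup.inclusion inf_le_left t) = p.τ.ρ t)
    (hσt'_ξ : σt' ⟨ξ', central_mem_Zd hξ'.1 p.x⟩ = 1) :
    ∃ ω : ℂ, (∃ n : ℕ, 1 ≤ n ∧ ω ^ n = 1) ∧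
      hatFn η p.x ξ' hξ'.1 σt' = ω • hatFn η p.x ξ hξ.1 σt := by
  obtain ⟨k, k', hk, hk', hpow⟩ := DeltaStar.exists_pow_eq_pow hξ hξ'
  have hζ : ξ ^ k ∈ DeltaStar η := DeltaStar.pow_mem hξ hk
  obtain ⟨n, hn, hηζ⟩ := DeltaStar.exists_map_eq_pow hζ
  obtain ⟨z, hz, hηz⟩ := p.hne
  obtain ⟨χ, hχ, hχη⟩ := p.exists_character hσt_ext hσt'_ext
  have := p.irr
  have hχζ : χ (⟨ξ, central_mem_Zd hξ.1 p.x⟩ ^ k) = 1 := by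
    refine FDRep.character_eq_one hχ (by rw [map_pow, hσt_ξ, one_pow]) ?_
    rw [show (⟨ξ, _⟩ ^ k : Zd p.x) = ⟨ξ', central_mem_Zd hξ'.1 p.x⟩ ^ k' from Subtype.ext hpow,
      map_pow, hσt'_ξ, one_pow]
  have hroot : χ ⟨z, hz⟩ ^ n = 1 := by
    rw [← map_pow, ← hχζ]
    exact hχη _ _ (by simp [hηz, hηζ])
  have hscale : hatFn η p.x ξ' hξ'.1 σt' = χ ⟨z, hz⟩ • hatFn η p.x ξ' hξ'.1 σt :=
    hatFn_eq_smul_of_repTrace _ (fun g hg => repTrace_eq_mul_of_eq_smul _ fun hgx => by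
      rw [hχ, hχη ⟨g, hgx⟩ ⟨z, hz⟩ (hg.trans hηz.symm)]) _ _
  have hshift : hatFn η p.x ξ' hξ'.1 σt = hatFn η p.x ξ hξ.1 σt :=
    (hatFn_of_pow_eq hξ'.1 hζ.1 (DeltaStar.not_isOfFinOrder hξ') hk' hpow.symm σt).symm.trans
      (hatFn_of_pow_eq hξ.1 hζ.1 (DeltaStar.not_isOfFinOrder hξ) hk rfl σt)
  exact ⟨χ ⟨z, hz⟩, ⟨n, hn, hroot⟩, hshift ▸ hscale⟩

/-- **Statement 10.** Let `η : Δ → ℤ` be a ℤ-grading and `(x,σ) ∈ M^0_η(Δ)`.  If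
`ξ, ξ' ∈ Δ*`, `σ̃` is an extension of `σ` to `Z_Δ(x)` on which `ξ` acts as the identity
and `σ̃'` is an extension of `σ` to `Z_Δ(x)` on which `ξ'` acts as the identity, then
`(x,σ)^_{ξ',σ̃'}` equals `(x,σ)^_{ξ,σ̃}` times a root of unity. -/
theorem hat_independent_of_choices
    {Δ : Type} [Group Δ] (η : Δ →* Multiplicative ℤ)
    (hsurj : Function.Surjective η) (hker : Finite η.ker)
    (p : PairD η 0)
    (ξ ξ' : Δ) (hξ : ξ ∈ DeltaStar η) (hξ' : ξ' ∈ DeltaStar η)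
    (σt : Representation ℂ ↥(Zd p.x) ↥p.τ)
    (hσt_ext : ∀ t : ↥(Kd η p.x), σt (Subgroup.inclusion inf_le_left t) = p.τ.ρ t)
    (hσt_ξ : σt ⟨ξ, central_mem_Zd hξ.1 p.x⟩ = 1)
    (σt' : Representation ℂ ↥(Zd p.x) ↥p.τ)
    (hσt'_ext : ∀ t : ↥(Kd η p.x), σt' (Subgroup.inclusion inf_le_left t) = p.τ.ρ t)
    (hσt'_ξ : σt' ⟨ξ', central_mem_Zd hξ'.1 p.x⟩ = 1) :
    ∃ ω : ℂ, (∃ n : ℕ, 1 ≤ n ∧ ω ^ n = 1) ∧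
      hatFn η p.x ξ' hξ'.1 σt' = ω • hatFn η p.x ξ hξ.1 σt :=
  hat_independent_of_choices_general η hker p ξ ξ' hξ hξ' σt hσt_ext hσt_ξ σt' hσt'_ext hσt'_ξ
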